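/- Let f : [0, T] → ℝ be continuous nonnegative with f(t) ≤ Cδe^{μt} + C∫₀ᵗ e^{(1+ε)μ(t-s)}(f(s)² + f(s)^p) ds for constants C, μ > 0, p > 1, ε = min{(p-1)μ/2, μ/2}/μ. Then there exists C₀ > 0 and δ₀ > 0 such that for all 0 < δ < δ₀, f(t) ≤ C₀ δ e^{μt} for all t ∈ [0, T_δ], where T_δ = log(ε₁/δ)/μ for small fixed ε₁ > 0. -/
import Mathlib


set_option maxHeartbeats 1000000 in
open Set intervalIntegral in
/-- Grönwall-type bootstrap: if `f δ` satisfies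
`f δ t ≤ C δ e^{μ t} + C ∫₀ᵗ e^{(1+ε)μ(t-s)} ((f δ s)² + (f δ s)^p) ds`
with `ε = min ((p-1)μ/2) (μ/2) / μ`, then for some `ε₁, C₀, δ₀ > 0` one has
`f δ t ≤ C₀ δ e^{μ t}` for all `0 < δ < δ₀` and `t ∈ [0, T] ∩ [0, log(ε₁/δ)/μ]`. -/
theorem gronwall_bootstrap (C μ p T : ℝ) (hC : 0 < C) (hμ : 0 < μ) (hp : 1 < p)
    (hT : 0 ≤ T) (f : ℝ → ℝ → ℝ)
    (hcont : ∀ δ, 0 < δ → ContinuousOn (f δ) (Icc 0 T))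
    (hnn : ∀ δ, 0 < δ → ∀ t ∈ Icc 0 T, 0 ≤ f δ t)
    (hineq : ∀ δ, 0 < δ → ∀ t ∈ Icc 0 T,
      f δ t ≤ C * δ * Real.exp (μ * t) +
        C * ∫ s in (0:ℝ)..t,
          Real.exp ((1 + min ((p - 1) * μ / 2) (μ / 2) / μ) * μ * (t - s)) *
            ((f δ s) ^ 2 + (f δ s) ^ p)) :
    ∃ ε₁ > 0, ∃ C₀ > 0, ∃ δ₀ > 0, ∀ δ, 0 < δ → δ < δ₀ →
      ∀ t ∈ Icc 0 T, t ≤ Real.log (ε₁ / δ) / μ →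
        f δ t ≤ C₀ * δ * Real.exp (μ * t) := by
  obtain ⟨a, ha_def⟩ : ∃ x : ℝ, x = (1 + min ((p - 1) * μ / 2) (μ / 2) / μ) * μ := ⟨_, rfl⟩
  simp only [← ha_def] at hineq
  have ha : a = μ + min ((p - 1) * μ / 2) (μ / 2) := by
    rw [ha_def, add_mul, one_mul, div_mul_cancel₀ _ (ne_of_gt hμ)]
  have hpμ : 0 < (p - 1) * μ := mul_pos (by linarith) hμ
  have ha2 : a ≤ 2 * μ := by
    have := min_le_right ((p - 1) * μ / 2) (μ / 2); linarith
  have hap : a ≤ p * μ := by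
    have := min_le_left ((p - 1) * μ / 2) (μ / 2); nlinarith
  have h2Cp : (0:ℝ) < (2 * C) ^ p := Real.rpow_pos_of_pos (by linarith) p
  obtain ⟨ε₁, hε₁_def⟩ : ∃ x : ℝ, x = min (1 / (16 * C ^ 2 * (T + 1)))
      ((1 / (4 * (T + 1) * (2 * C) ^ p)) ^ (1 / (p - 1))) := ⟨_, rfl⟩
  have hε₁pos : 0 < ε₁ := by
    rw [hε₁_def]
    apply lt_min
    · positivity
    · exact Real.rpow_pos_of_pos (by positivity) _
  have hε₁a : ε₁ * (16 * C ^ 2 * (T + 1)) ≤ 1 := by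
    have h := min_le_left (1 / (16 * C ^ 2 * (T + 1)))
      ((1 / (4 * (T + 1) * (2 * C) ^ p)) ^ (1 / (p - 1)))
    rw [le_div_iff₀ (by positivity)] at h
    rw [hε₁_def]
    simpa using h
  have hε₁b : ε₁ ^ (p - 1) * (4 * (T + 1) * (2 * C) ^ p) ≤ 1 := by
    have hb : (0:ℝ) < 1 / (4 * (T + 1) * (2 * C) ^ p) := by positivity
    have h1 : ε₁ ^ (p - 1) ≤ ((1 / (4 * (T + 1) * (2 * C) ^ p)) ^ (1 / (p - 1))) ^ (p - 1) :=
      Real.rpow_le_rpow hε₁pos.le (hε₁_def ▸ min_le_right _ _) (by linarith)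
    rw [← Real.rpow_mul hb.le, one_div (p - 1), inv_mul_cancel₀ (by intro h; exact absurd h (by intro hh; linarith [hh] : ¬ p - 1 = 0)), Real.rpow_one] at h1
    rw [← le_div_iff₀ (by positivity)]
    simpa [one_div] using h1
  refine ⟨ε₁, hε₁pos, 2 * C, by linarith, 1, one_pos, ?_⟩
  intro δ hδ hδ1 t₀ ht₀ ht₀L
  obtain ⟨L, hL⟩ : ∃ x : ℝ, x = Real.log (ε₁ / δ) / μ := ⟨_, rfl⟩
  rw [← hL] at ht₀L
  obtain ⟨T', hT'def⟩ : ∃ x : ℝ, x = min T L := ⟨_, rfl⟩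
  have hT'T : T' ≤ T := hT'def ▸ min_le_left _ _
  have ht₀T' : t₀ ≤ T' := hT'def ▸ le_min ht₀.2 ht₀L
  have hT'0 : 0 ≤ T' := le_trans ht₀.1 ht₀T'
  have hXle : ∀ t : ℝ, t ≤ T' → δ * Real.exp (μ * t) ≤ ε₁ := by
    intro t htT'
    have htL : t ≤ L := le_trans htT' (hT'def ▸ min_le_right _ _)
    rw [hL] at htL
    have h1 : t * μ ≤ Real.log (ε₁ / δ) := (le_div_iff₀ hμ).1 htL
    have h2 : μ * t ≤ Real.log (ε₁ / δ) := by rw [mul_comm]; exact h1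
    have hexp : Real.exp (μ * t) ≤ ε₁ / δ :=
      le_trans (Real.exp_le_exp.2 h2) (le_of_eq (Real.exp_log (div_pos hε₁pos hδ)))
    calc δ * Real.exp (μ * t) ≤ δ * (ε₁ / δ) :=
          mul_le_mul_of_nonneg_left hexp hδ.le
      _ = ε₁ := by field_simp
  have hcf := hcont δ hδ
  -- key improvement step
  have key : ∀ t, 0 ≤ t → t ≤ T' →
      (∀ s ∈ Icc (0:ℝ) t, f δ s ≤ 2 * C * δ * Real.exp (μ * s)) →
      f δ t ≤ (3/2) * C * δ * Real.exp (μ * t) := by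
    intro t ht0 htT' hP
    have htT : t ≤ T := le_trans htT' hT'T
    have htI : t ∈ Icc (0:ℝ) T := ⟨ht0, htT⟩
    obtain ⟨X, hX⟩ : ∃ x : ℝ, x = δ * Real.exp (μ * t) := ⟨_, rfl⟩
    have hXpos : 0 < X := by rw [hX]; positivity
    have hXε : X ≤ ε₁ := hX ▸ hXle t htT'
    have hsub : Icc (0:ℝ) t ⊆ Icc 0 T := Icc_subset_Icc le_rfl htT
    have hpt : ∀ s ∈ Icc (0:ℝ) t,
        Real.exp (a * (t - s)) * ((f δ s) ^ 2 + (f δ s) ^ p)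
          ≤ (2 * C) ^ 2 * X ^ 2 + (2 * C) ^ p * X ^ p := by
      intro s hs
      have hs0 : 0 ≤ s := hs.1
      have hst : s ≤ t := hs.2
      have hfs0 : 0 ≤ f δ s := hnn δ hδ s (hsub hs)
      have hfs : f δ s ≤ 2 * C * δ * Real.exp (μ * s) := hP s hs
      have hE : (0:ℝ) < Real.exp (μ * s) := Real.exp_pos _
      have h2 : (f δ s) ^ 2 ≤ (2 * C * δ * Real.exp (μ * s)) ^ 2 := by nlinarith
      have hpw : (f δ s) ^ p ≤ (2 * C * δ * Real.exp (μ * s)) ^ p :=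
        Real.rpow_le_rpow hfs0 hfs (by linarith)
      have hep : (0:ℝ) < Real.exp (a * (t - s)) := Real.exp_pos _
      have e1 : (2 * C * δ * Real.exp (μ * s)) ^ 2
          = (2 * C) ^ 2 * δ ^ 2 * Real.exp (μ * s + μ * s) := by
        rw [Real.exp_add]; ring
      have e2 : (2 * C * δ * Real.exp (μ * s)) ^ p
          = (2 * C) ^ p * δ ^ p * Real.exp ((μ * s) * p) := by
        rw [Real.mul_rpow (by positivity) hE.le,
          Real.mul_rpow (by positivity) hδ.le, ← Real.exp_mul]
      have eX2 : X ^ 2 = δ ^ 2 * Real.exp (μ * t + μ * t) := by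
        rw [hX, Real.exp_add]; ring
      have eXp : X ^ p = δ ^ p * Real.exp ((μ * t) * p) := by
        rw [hX, Real.mul_rpow hδ.le (Real.exp_pos _).le, ← Real.exp_mul]
      have hm1 : a * (t - s) + (μ * s + μ * s) ≤ μ * t + μ * t := by
        nlinarith [mul_le_mul_of_nonneg_right ha2 (sub_nonneg.2 hst)]
      have hm2 : a * (t - s) + (μ * s) * p ≤ (μ * t) * p := by
        nlinarith [mul_le_mul_of_nonneg_right hap (sub_nonneg.2 hst)]
      calc Real.exp (a * (t - s)) * ((f δ s) ^ 2 + (f δ s) ^ p)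
          ≤ Real.exp (a * (t - s)) *
            ((2 * C * δ * Real.exp (μ * s)) ^ 2 + (2 * C * δ * Real.exp (μ * s)) ^ p) :=
            mul_le_mul_of_nonneg_left (by linarith) hep.le
        _ = Real.exp (a * (t - s)) * Real.exp (μ * s + μ * s) * ((2 * C) ^ 2 * δ ^ 2)
            + Real.exp (a * (t - s)) * Real.exp ((μ * s) * p) * ((2 * C) ^ p * δ ^ p) := by
            rw [e1, e2]; ring
        _ ≤ Real.exp (μ * t + μ * t) * ((2 * C) ^ 2 * δ ^ 2)
            + Real.exp ((μ * t) * p) * ((2 * C) ^ p * δ ^ p) := by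
            rw [← Real.exp_add, ← Real.exp_add]
            have g1 : Real.exp (a * (t - s) + (μ * s + μ * s)) ≤ Real.exp (μ * t + μ * t) :=
              Real.exp_le_exp.2 hm1
            have g2 : Real.exp (a * (t - s) + (μ * s) * p) ≤ Real.exp ((μ * t) * p) :=
              Real.exp_le_exp.2 hm2
            have c1 : (0:ℝ) ≤ (2 * C) ^ 2 * δ ^ 2 := by positivity
            have c2 : (0:ℝ) ≤ (2 * C) ^ p * δ ^ p := by positivity
            exact add_le_add (mul_le_mul_of_nonneg_right g1 c1)
              (mul_le_mul_of_nonneg_right g2 c2)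
        _ = (2 * C) ^ 2 * X ^ 2 + (2 * C) ^ p * X ^ p := by rw [eX2, eXp]; ring
    have hcont_int : ContinuousOn
        (fun s => Real.exp (a * (t - s)) * ((f δ s) ^ 2 + (f δ s) ^ p)) (Icc 0 t) := by
      apply ContinuousOn.mul
      · exact (Real.continuous_exp.comp
          (continuous_const.mul (continuous_const.sub continuous_id))).continuousOn
      · exact ((hcf.mono hsub).pow 2).add
          ((hcf.mono hsub).rpow_const (fun x _ => Or.inr (by linarith)))
    have hii : IntervalIntegrable
        (fun s => Real.exp (a * (t - s)) * ((f δ s) ^ 2 + (f δ s) ^ p))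
        MeasureTheory.volume 0 t := hcont_int.intervalIntegrable_of_Icc ht0
    have hIle : (∫ s in (0:ℝ)..t, Real.exp (a * (t - s)) * ((f δ s) ^ 2 + (f δ s) ^ p))
        ≤ t * ((2 * C) ^ 2 * X ^ 2 + (2 * C) ^ p * X ^ p) := by
      have h := intervalIntegral.integral_mono_on ht0 hii
        (intervalIntegrable_const) hpt
      rwa [intervalIntegral.integral_const, smul_eq_mul, sub_zero] at h
    have hX2 : X ^ 2 ≤ ε₁ * X := by nlinarith
    have hXp : X ^ p ≤ ε₁ ^ (p - 1) * X := by
      have h1 : X ^ (p - 1) ≤ ε₁ ^ (p - 1) :=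
        Real.rpow_le_rpow hXpos.le hXε (by linarith)
      have e : X ^ (p - 1 + 1) = X ^ (p - 1) * X := by
        rw [Real.rpow_add hXpos, Real.rpow_one]
      rw [sub_add_cancel] at e
      rw [e]
      exact mul_le_mul_of_nonneg_right h1 hXpos.le
    have hS0 : (0:ℝ) ≤ (2 * C) ^ 2 * X ^ 2 + (2 * C) ^ p * X ^ p := by
      have : (0:ℝ) ≤ X ^ p := Real.rpow_nonneg hXpos.le p
      positivity
    have h5 : (2 * C) ^ 2 * X ^ 2 + (2 * C) ^ p * X ^ p
        ≤ (2 * C) ^ 2 * (ε₁ * X) + (2 * C) ^ p * (ε₁ ^ (p - 1) * X) := by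
      have u1 := mul_le_mul_of_nonneg_left hX2 (by positivity : (0:ℝ) ≤ (2 * C) ^ 2)
      have u2 := mul_le_mul_of_nonneg_left hXp h2Cp.le
      linarith
    have h6 : t * ((2 * C) ^ 2 * X ^ 2 + (2 * C) ^ p * X ^ p)
        ≤ (T + 1) * ((2 * C) ^ 2 * (ε₁ * X) + (2 * C) ^ p * (ε₁ ^ (p - 1) * X)) :=
      mul_le_mul (by linarith) h5 hS0 (by linarith)
    have h7 : (T + 1) * ((2 * C) ^ 2 * (ε₁ * X) + (2 * C) ^ p * (ε₁ ^ (p - 1) * X))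
        ≤ (1/2) * X := by
      have w1 := mul_le_mul_of_nonneg_right hε₁a (by positivity : (0:ℝ) ≤ X / 4)
      have w2 := mul_le_mul_of_nonneg_right hε₁b (by positivity : (0:ℝ) ≤ X / 4)
      nlinarith [w1, w2]
    have hmain := hineq δ hδ t htI
    have h8 : C * (∫ s in (0:ℝ)..t, Real.exp (a * (t - s)) * ((f δ s) ^ 2 + (f δ s) ^ p))
        ≤ C * ((1/2) * X) :=
      mul_le_mul_of_nonneg_left (le_trans hIle (le_trans h6 h7)) hC.le
    calc f δ t ≤ C * δ * Real.exp (μ * t) +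
          C * ∫ s in (0:ℝ)..t, Real.exp (a * (t - s)) * ((f δ s) ^ 2 + (f δ s) ^ p) := hmain
      _ ≤ C * δ * Real.exp (μ * t) + C * ((1/2) * X) := by linarith
      _ = (3/2) * C * δ * Real.exp (μ * t) := by rw [hX]; ring
  -- the bootstrap set
  obtain ⟨A, hA_def⟩ : ∃ A : Set ℝ, A = {t | t ∈ Icc (0:ℝ) T' ∧
    ∀ s ∈ Icc (0:ℝ) t, f δ s ≤ 2 * C * δ * Real.exp (μ * s)} := ⟨_, rfl⟩
  have hA_mem : ∀ x, x ∈ A ↔ (x ∈ Icc (0:ℝ) T' ∧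
      ∀ s ∈ Icc (0:ℝ) x, f δ s ≤ 2 * C * δ * Real.exp (μ * s)) := by
    intro x; rw [hA_def]; rfl
  have hA0 : (0:ℝ) ∈ A := by
    rw [hA_mem]
    have h0 : f δ 0 ≤ 2 * C * δ * Real.exp (μ * 0) := by
      have h := hineq δ hδ 0 ⟨le_rfl, hT⟩
      rw [intervalIntegral.integral_same] at h
      have : Real.exp (μ * 0) = 1 := by norm_num
      rw [this] at h ⊢
      nlinarith
    exact ⟨⟨le_rfl, hT'0⟩, fun s hs => by
      have : s = 0 := le_antisymm hs.2 hs.1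
      rw [this]; exact h0⟩
  have hAne : A.Nonempty := ⟨0, hA0⟩
  have hAbdd : BddAbove A := ⟨T', fun x hx => ((hA_mem x).1 hx).1.2⟩
  obtain ⟨m, hm_def⟩ : ∃ x : ℝ, x = sSup A := ⟨_, rfl⟩
  have hm0 : 0 ≤ m := hm_def ▸ le_csSup hAbdd hA0
  have hmT' : m ≤ T' := hm_def ▸ csSup_le hAne fun x hx => ((hA_mem x).1 hx).1.2
  have hmT : m ∈ Icc (0:ℝ) T := ⟨hm0, le_trans hmT' hT'T⟩
  have hPlt : ∀ s, 0 ≤ s → s < m → f δ s ≤ 2 * C * δ * Real.exp (μ * s) := by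
    intro s hs0 hsm
    obtain ⟨x, hxA, hsx⟩ := exists_lt_of_lt_csSup hAne (hm_def ▸ hsm)
    exact ((hA_mem x).1 hxA).2 s ⟨hs0, hsx.le⟩
  have hgcont : ContinuousOn (fun s => 2 * C * δ * Real.exp (μ * s) - f δ s) (Icc 0 T) := by
    exact ContinuousOn.sub
      (continuous_const.mul (Real.continuous_exp.comp
        (continuous_const.mul continuous_id))).continuousOn hcf
  have hPm : f δ m ≤ 2 * C * δ * Real.exp (μ * m) := by
    rcases eq_or_lt_of_le hm0 with h0m | h0m
    · rw [← h0m]; exact ((hA_mem 0).1 hA0).2 0 ⟨le_rfl, le_rfl⟩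
    · have hne : m ∈ closure (Ico (0:ℝ) m) := by
        rw [closure_Ico h0m.ne]; exact ⟨hm0, le_rfl⟩
      have hnb : (nhdsWithin m (Ico (0:ℝ) m)).NeBot :=
        mem_closure_iff_nhdsWithin_neBot.1 hne
      have hIsub : Ico (0:ℝ) m ⊆ Icc 0 T := fun s hs => ⟨hs.1, le_trans hs.2.le hmT.2⟩
      have htend : Filter.Tendsto (fun s => 2 * C * δ * Real.exp (μ * s) - f δ s)
          (nhdsWithin m (Ico (0:ℝ) m)) (nhds (2 * C * δ * Real.exp (μ * m) - f δ m)) :=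
        (hgcont m hmT).mono hIsub
      have hev : ∀ᶠ s in nhdsWithin m (Ico (0:ℝ) m),
          0 ≤ 2 * C * δ * Real.exp (μ * s) - f δ s := by
        filter_upwards [self_mem_nhdsWithin] with s hs
        have := hPlt s hs.1 hs.2
        linarith
      have := ge_of_tendsto htend hev
      linarith
  have hmA : m ∈ A := by
    rw [hA_mem]
    refine ⟨⟨hm0, hmT'⟩, fun s hs => ?_⟩
    rcases lt_or_eq_of_le hs.2 with h | h
    · exact hPlt s hs.1 h
    · rw [h]; exact hPm
  have hkeym : f δ m ≤ (3/2) * C * δ * Real.exp (μ * m) :=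
    key m hm0 hmT' ((hA_mem m).1 hmA).2
  have hmeq : m = T' := by
    by_contra hne
    have hlt : m < T' := lt_of_le_of_ne hmT' hne
    have hstrict : 0 < 2 * C * δ * Real.exp (μ * m) - f δ m := by
      have : (0:ℝ) < C * δ * Real.exp (μ * m) := by positivity
      linarith
    have hev : ∀ᶠ s in nhdsWithin m (Icc (0:ℝ) T),
        0 < 2 * C * δ * Real.exp (μ * s) - f δ s :=
      ((hgcont m hmT)).eventually (eventually_gt_nhds hstrict)
    obtain ⟨r, hr, hball⟩ := Metric.mem_nhdsWithin_iff.1 hev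
    obtain ⟨m', hm'_def⟩ : ∃ x : ℝ, x = min T' (m + r / 2) := ⟨_, rfl⟩
    have hm'T' : m' ≤ T' := hm'_def ▸ min_le_left _ _
    have hm'r : m' ≤ m + r / 2 := hm'_def ▸ min_le_right _ _
    have hmm' : m < m' := hm'_def ▸ lt_min hlt (by linarith)
    have hm'A : m' ∈ A := by
      rw [hA_mem]
      refine ⟨⟨by linarith, hm'T'⟩, fun s hs => ?_⟩
      rcases le_or_gt s m with h | h
      · exact ((hA_mem m).1 hmA).2 s ⟨hs.1, h⟩
      · have hsT : s ∈ Icc (0:ℝ) T :=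
          ⟨hs.1, le_trans hs.2 (le_trans hm'T' hT'T)⟩
        have hdist : dist s m < r := by
          rw [Real.dist_eq, abs_of_nonneg (by linarith)]
          have : s ≤ m + r / 2 := le_trans hs.2 hm'r
          linarith
        have : 0 < 2 * C * δ * Real.exp (μ * s) - f δ s :=
          hball ⟨Metric.mem_ball.2 hdist, hsT⟩
        linarith
    have : m' ≤ m := hm_def ▸ le_csSup hAbdd hm'A
    linarith
  -- conclude
  have ht₀m : t₀ ∈ Icc (0:ℝ) m := ⟨ht₀.1, by rw [hmeq]; exact ht₀T'⟩
  exact ((hA_mem m).1 hmA).2 t₀ ht₀m
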